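/- arXiv:0807.3377 — 5 statements merged into one kernel-verified Lean document; each statement's English description precedes it below -/
import Mathlib

section
/- For a quasimetric J on X, define σ_n(J) as the smallest constant σ_n ≥ 1 such that J(x₁,x_{n+1}) ≤ σ_n Σ_{i=1}^n J(x_i,x_{i+1}) for all chains of n+1 points. Then for all natural numbers n, m: σ_{nm}(J) ≤ σ_n(J)·σ_m(J). -/
/-!
The infimum defining `σ_n` is attained, since the admissible constants form a closed set that is
nonempty (it contains `σ^n` by iterating the quasi-triangle inequality). Cutting a chain of
`n * m` steps into `m` blocks of `n` steps, `σ_m` bounds the endpoints by the chain of block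
endpoints and `σ_n` bounds each block, so `σ_n σ_m` is admissible for `n * m`.
-/

/-- `chainConst J n` is the smallest constant `σ_n ≥ 1` such that
`J (x 0) (x n) ≤ σ_n * ∑_{i<n} J (x i) (x (i+1))` for all chains of `n+1` points. -/
noncomputable def chainConst {X : Type*} (J : X → X → ℝ) (n : ℕ) : ℝ :=
  sInf {σ : ℝ | 1 ≤ σ ∧
    ∀ x : ℕ → X, J (x 0) (x n) ≤ σ * ∑ i ∈ Finset.range n, J (x i) (x (i + 1))}

open Finset

section

variable {X : Type*} (J : X → X → ℝ)

def ChainBound (n : ℕ) (c : ℝ) : Prop :=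
  ∀ x : ℕ → X, J (x 0) (x n) ≤ c * ∑ i ∈ range n, J (x i) (x (i + 1))

theorem sum_range_mul_eq_sum_sum {M : Type*} [AddCommMonoid M] (f : ℕ → M) (n m : ℕ) :
    ∑ k ∈ range (m * n), f k = ∑ j ∈ range m, ∑ i ∈ range n, f (j * n + i) := by
  induction m with
  | zero => simp
  | succ m ih => rw [sum_range_succ, ← ih, Nat.succ_mul, sum_range_add]

theorem ChainBound.mul {n m : ℕ} {a b : ℝ} (ha : ChainBound J n a) (hb : ChainBound J m b)
    (hb0 : 0 ≤ b) : ChainBound J (n * m) (a * b) := by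
  intro x
  have hblock : ∀ j, J (x (j * n)) (x ((j + 1) * n)) ≤
      a * ∑ i ∈ range n, J (x (j * n + i)) (x (j * n + i + 1)) := fun j => by
    simpa [Nat.succ_mul, add_assoc] using ha fun i => x (j * n + i)
  calc J (x 0) (x (n * m)) = J (x (0 * n)) (x (m * n)) := by rw [zero_mul, mul_comm]
    _ ≤ b * ∑ j ∈ range m, J (x (j * n)) (x ((j + 1) * n)) := hb fun j => x (j * n)
    _ ≤ b * ∑ j ∈ range m, a * ∑ i ∈ range n, J (x (j * n + i)) (x (j * n + i + 1)) := by
      gcongr with j; exact hblock j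
    _ = a * b * ∑ k ∈ range (n * m), J (x k) (x (k + 1)) := by
      rw [mul_comm n m, sum_range_mul_eq_sum_sum, ← mul_sum]; ring

theorem isClosed_setOf_one_le_and_chainBound (n : ℕ) :
    IsClosed {c : ℝ | 1 ≤ c ∧ ChainBound J n c} := by
  simp only [ChainBound, Set.ofPred_and, Set.ofPred_forall]
  exact isClosed_Ici.inter <| isClosed_iInter fun x =>
    isClosed_le continuous_const (continuous_id.mul continuous_const)

theorem one_le_chainConst_and_chainBound {n : ℕ} (h : ∃ c, 1 ≤ c ∧ ChainBound J n c) :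
    1 ≤ chainConst J n ∧ ChainBound J n (chainConst J n) :=
  (isClosed_setOf_one_le_and_chainBound J n).csInf_mem h ⟨1, fun _ hc => hc.1⟩

theorem chainConst_mul_le {n m : ℕ} (hn : ∃ c, 1 ≤ c ∧ ChainBound J n c)
    (hm : ∃ c, 1 ≤ c ∧ ChainBound J m c) :
    chainConst J (n * m) ≤ chainConst J n * chainConst J m := by
  obtain ⟨hn1, hnJ⟩ := one_le_chainConst_and_chainBound J hn
  obtain ⟨hm1, hmJ⟩ := one_le_chainConst_and_chainBound J hm
  exact csInf_le ⟨1, fun _ hc => hc.1⟩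
    ⟨one_le_mul_of_one_le_of_one_le hn1 hm1, hnJ.mul J hmJ (by linarith)⟩

theorem chainBound_pow {σ : ℝ} (hnonneg : ∀ x y, 0 ≤ J x y) (hself : ∀ x, J x x = 0)
    (hσ : 1 ≤ σ) (htri : ∀ x y z, J x y ≤ σ * (J x z + J z y)) (k : ℕ) :
    ChainBound J k (σ ^ k) := by
  induction k with
  | zero => intro x; simp [hself]
  | succ k ih =>
    intro x
    have hlast := hnonneg (x k) (x (k + 1))
    have hσk : σ ≤ σ ^ (k + 1) := le_self_pow₀ hσ k.succ_ne_zero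
    calc J (x 0) (x (k + 1)) ≤ σ * (J (x 0) (x k) + J (x k) (x (k + 1))) := htri _ _ _
      _ ≤ σ * (σ ^ k * ∑ i ∈ range k, J (x i) (x (i + 1)))
          + σ ^ (k + 1) * J (x k) (x (k + 1)) := by
        rw [mul_add]; gcongr; exact ih x
      _ = σ ^ (k + 1) * ∑ i ∈ range (k + 1), J (x i) (x (i + 1)) := by
        rw [sum_range_succ, pow_succ]; ring

end

theorem stmt_1_general {X : Type*} (J : X → X → ℝ) (σ : ℝ)
    (hnonneg : ∀ x y, 0 ≤ J x y)
    (hiff : ∀ x y, J x y = 0 ↔ x = y)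
    (hσ : 1 ≤ σ)
    (htri : ∀ x y z, J x y ≤ σ * (J x z + J z y))
    (n m : ℕ) :
    chainConst J (n * m) ≤ chainConst J n * chainConst J m := by
  have hpow k : ∃ c, 1 ≤ c ∧ ChainBound J k c :=
    ⟨σ ^ k, one_le_pow₀ hσ, chainBound_pow J hnonneg (fun x => (hiff x x).2 rfl) hσ htri k⟩
  exact chainConst_mul_le J (hpow n) (hpow m)

/-- For a quasimetric `J` on `X`, `σ_{nm}(J) ≤ σ_n(J) · σ_m(J)`. -/
theorem stmt_1 {X : Type*} [Nonempty X] (J : X → X → ℝ) (σ : ℝ)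
    (hnonneg : ∀ x y, 0 ≤ J x y)
    (hiff : ∀ x y, J x y = 0 ↔ x = y)
    (hsymm : ∀ x y, J x y = J y x)
    (hσ : 1 ≤ σ)
    (htri : ∀ x y z, J x y ≤ σ * (J x z + J z y))
    (n m : ℕ) :
    chainConst J (n * m) ≤ chainConst J n * chainConst J m :=
  stmt_1_general J σ hnonneg hiff hσ htri n m
end

section
/- Suppose J satisfies nonnegativity, identity of indiscernibles, symmetry, and the inequality |J(x,y) − J(z,w)| ≤ σ(J(x,z) + J(w,y)) for all x,y,z,w ∈ X and some σ ≥ 1. Then J is a quasimetric on X, and J is continuous in the sense that whenever J(x_n,x) → 0 and J(y_n,y) → 0, we have J(x_n,y_n) → J(x,y). -/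
open Filter Topology

/-- If `J` is nonnegative, symmetric, satisfies identity of indiscernibles, and
`|J(x,y) − J(z,w)| ≤ σ(J(x,z) + J(w,y))` for some `σ ≥ 1`, then `J` is a
quasimetric (relaxed triangle inequality with constant `σ`), and `J` is
continuous: `J(x_n,y_n) → J(x,y)` whenever `J(x_n,x) → 0` and `J(y_n,y) → 0`. -/
theorem stmt_3 {X : Type*} (J : X → X → ℝ) (σ : ℝ)
    (hnonneg : ∀ x y, 0 ≤ J x y)
    (hiff : ∀ x y, J x y = 0 ↔ x = y)
    (hsymm : ∀ x y, J x y = J y x)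
    (hσ : 1 ≤ σ)
    (hquad : ∀ x y z w, |J x y - J z w| ≤ σ * (J x z + J w y)) :
    (∀ x y z, J x y ≤ σ * (J x z + J z y)) ∧
    (∀ (xn yn : ℕ → X) (x y : X),
      Tendsto (fun n => J (xn n) x) atTop (𝓝 0) →
      Tendsto (fun n => J (yn n) y) atTop (𝓝 0) →
      Tendsto (fun n => J (xn n) (yn n)) atTop (𝓝 (J x y))) := by
  constructor
  · intro x y z
    have h := hquad x y z y
    rw [(hiff y y).mpr rfl, add_zero] at h
    have h1 : J x y - J z y ≤ σ * J x z := le_trans (le_abs_self _) h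
    have h2 : J z y ≤ σ * J z y :=
      le_mul_of_one_le_left (hnonneg z y) hσ
    nlinarith
  · intro xn yn x y hx hy
    have key : ∀ n, |J (xn n) (yn n) - J x y| ≤ σ * (J (xn n) x + J (yn n) y) := by
      intro n
      have h := hquad (xn n) (yn n) x y
      rwa [hsymm y (yn n)] at h
    have hlim : Tendsto (fun n => σ * (J (xn n) x + J (yn n) y)) atTop (𝓝 0) := by
      have := ((hx.add hy).const_mul σ)
      simpa using this
    have : Tendsto (fun n => J (xn n) (yn n) - J x y) atTop (𝓝 0) := by
      refine squeeze_zero_norm (fun n => ?_) hlim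
      simpa [Real.norm_eq_abs] using key n
    have := this.add_const (J x y)
    simpa using this
end

section
/- Suppose (X,J) is a complete quasimetric space and J is lower semicontinuous. Then (C(K,(X,J)), J_∞) is a complete quasimetric space, where K is a compact metric space and J_∞(f,h) = sup_{x∈K} J(f(x),h(x)). -/
open Filter Topology

/-- If `(X,J)` is a complete quasimetric space with `J` lower semicontinuous and
`K` is a compact metric space, then `(C(K,(X,J)), J_∞)` is complete: every
sequence of continuous maps that is uniformly Cauchy converges uniformly to a
continuous map. -/
theorem stmt_7 {X K : Type*} [MetricSpace K] [CompactSpace K]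
    (J : X → X → ℝ) (σ : ℝ)
    (hnonneg : ∀ x y, 0 ≤ J x y)
    (hiff : ∀ x y, J x y = 0 ↔ x = y)
    (hsymm : ∀ x y, J x y = J y x)
    (hσ : 1 ≤ σ)
    (htri : ∀ x y z, J x y ≤ σ * (J x z + J z y))
    (hcomplete : ∀ u : ℕ → X,
      (∀ ε > 0, ∃ N : ℕ, ∀ n ≥ N, ∀ m ≥ N, J (u n) (u m) ≤ ε) →
      ∃ x : X, Tendsto (fun n => J (u n) x) atTop (𝓝 0))
    (hlsc : ∀ (xn yn : ℕ → X) (x y : X),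
      Tendsto (fun n => J (xn n) x) atTop (𝓝 0) →
      Tendsto (fun n => J (yn n) y) atTop (𝓝 0) →
      J x y ≤ atTop.liminf (fun n => J (xn n) (yn n)))
    (F : ℕ → K → X)
    (hFcont : ∀ n, ∀ (u : ℕ → K) (x : K),
      Tendsto (fun k => dist (u k) x) atTop (𝓝 0) →
      Tendsto (fun k => J (F n (u k)) (F n x)) atTop (𝓝 0))
    (hFcauchy : ∀ ε > 0, ∃ N : ℕ, ∀ n ≥ N, ∀ m ≥ N, ∀ x : K, J (F n x) (F m x) ≤ ε) :
    ∃ f : K → X,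
      (∀ (u : ℕ → K) (x : K),
        Tendsto (fun k => dist (u k) x) atTop (𝓝 0) →
        Tendsto (fun k => J (f (u k)) (f x)) atTop (𝓝 0)) ∧
      (∀ ε > 0, ∃ N : ℕ, ∀ n ≥ N, ∀ x : K, J (F n x) (f x) ≤ ε) := by
 -- Pointwise Cauchy, so define f pointwise via completeness.
  choose f hf using fun x : K => hcomplete (fun n => F n x)
    (fun ε hε => (hFcauchy ε hε).imp fun N hN n hn m hm => hN n hn m hm x)
  -- Uniform convergence of F to f, via lower semicontinuity.
  have key : ∀ ε > 0, ∃ N : ℕ, ∀ n ≥ N, ∀ x : K, J (F n x) (f x) ≤ ε := by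
    intro ε hε
    obtain ⟨N, hN⟩ := hFcauchy ε hε
    refine ⟨N, fun n hn x => ?_⟩
    have h1 : J (F n x) (f x) ≤ atTop.liminf (fun m => J (F n x) (F m x)) := by
      refine hlsc (fun _ => F n x) (fun m => F m x) (F n x) (f x) ?_ (hf x)
      simp [(hiff (F n x) (F n x)).mpr rfl]
    refine h1.trans (Filter.liminf_le_of_frequently_le ?_ ?_)
    · exact (Filter.eventually_atTop.mpr ⟨N, fun m hm => hN n hn m hm x⟩).frequently
    · exact ⟨0, Filter.eventually_map.mpr (Filter.Eventually.of_forall fun m => hnonneg _ _)⟩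
  refine ⟨f, ?_, key⟩
  intro u x hux
  rw [Metric.tendsto_atTop]
  intro ε hε
  have hσ0 : (0:ℝ) < σ := lt_of_lt_of_le one_pos hσ
  have hε' : 0 < ε / (4 * σ ^ 2) := by positivity
  set ε' := ε / (4 * σ ^ 2) with hε'def
  obtain ⟨N, hN⟩ := key ε' hε'
  have hcont := hFcont N u x hux
  obtain ⟨M, hM⟩ := Filter.eventually_atTop.mp (hcont.eventually_lt_const hε')
  refine ⟨M, fun k hk => ?_⟩
  have b1 : J (f (u k)) (f x) ≤ σ * (J (f (u k)) (F N (u k)) + J (F N (u k)) (f x)) :=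
    htri _ _ _
  have b2 : J (F N (u k)) (f x) ≤ σ * (J (F N (u k)) (F N x) + J (F N x) (f x)) :=
    htri _ _ _
  have e1 : J (f (u k)) (F N (u k)) ≤ ε' := by
    rw [hsymm]; exact hN N le_rfl (u k)
  have e2 : J (F N (u k)) (F N x) < ε' := hM k hk
  have e3 : J (F N x) (f x) ≤ ε' := hN N le_rfl x
  have hεeq : ε = 4 * σ ^ 2 * ε' := by
    rw [hε'def]; field_simp
  have c1 : J (F N (u k)) (f x) < 2 * σ * ε' := by nlinarith
  have hbound : J (f (u k)) (f x) < ε := by nlinarith [mul_pos hσ0 hε', mul_pos (mul_pos hσ0 hσ0) hε']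
  rw [Real.dist_eq, sub_zero, abs_of_nonneg (hnonneg _ _)]
  exact hbound
end

section
/- Let J be a quasimetric on X, f an N-piecewise metric Lipschitz curve from x to y with associated partition points a_0<⋯<a_N. Then J(x,y) ≤ σ(J)^{N-1} · L(f). In particular, if the infimum D_J^{(N)}(x,y) of such lengths equals 0, then x = y. -/
open Filter Topology
open scoped ENNReal

variable {X : Type*}

/-- The length (in `[0,∞]`) of `f` on `[u,v]`, computed as the supremum of
variations `∑ J (f (t i)) (f (t (i+1)))` over all monotone chains
`u = t 0 ≤ t 1 ≤ ⋯ ≤ t n = v`. -/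
noncomputable def pieceLen (J : X → X → ℝ) (f : ℝ → X) (u v : ℝ) : ℝ≥0∞ :=
  ⨆ (n : ℕ) (t : ℕ → ℝ) (_ : Monotone t ∧ t 0 = u ∧ t n = v),
    ∑ i ∈ Finset.range n, ENNReal.ofReal (J (f (t i)) (f (t (i + 1))))

/-- On the piece `[u,v]`, `J` is a metric on the image `f([u,v])` (i.e. the
genuine triangle inequality holds there) and `f` is Lipschitz. -/
def IsPiece (J : X → X → ℝ) (f : ℝ → X) (u v : ℝ) : Prop :=
  (∀ s ∈ Set.Icc u v, ∀ t ∈ Set.Icc u v, ∀ r ∈ Set.Icc u v,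
      J (f s) (f r) ≤ J (f s) (f t) + J (f t) (f r)) ∧
  (∃ C : ℝ, ∀ s ∈ Set.Icc u v, ∀ t ∈ Set.Icc u v, J (f s) (f t) ≤ C * |s - t|)

/-- `f : [a,b] → (X,J)` is an `N`-piecewise metric Lipschitz curve with
partition `P`: `a = P 0 < P 1 < ⋯ < P N = b`, and on each `[P i, P (i+1)]`
the function `J` is a metric on the image and `f` is Lipschitz. -/
def IsPML (J : X → X → ℝ) (N : ℕ) (a b : ℝ) (f : ℝ → X) (P : ℕ → ℝ) : Prop :=
  P 0 = a ∧ P N = b ∧ (∀ i < N, P i < P (i + 1)) ∧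
  ∀ i < N, IsPiece J f (P i) (P (i + 1))

/-- The length of an `N`-piecewise metric Lipschitz curve: the sum of the
lengths of its pieces. -/
noncomputable def pmlLength (J : X → X → ℝ) (N : ℕ) (f : ℝ → X) (P : ℕ → ℝ) : ℝ≥0∞ :=
  ∑ i ∈ Finset.range N, pieceLen J f (P i) (P (i + 1))

/-- `D_J^{(N)}(x,y)`: the infimal length of `N`-piecewise metric Lipschitz
curves on `[0,1]` from `x` to `y` (`∞` if there are none). -/
noncomputable def DJN (J : X → X → ℝ) (N : ℕ) (x y : X) : ℝ≥0∞ :=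
  ⨅ (f : ℝ → X) (P : ℕ → ℝ) (_ : IsPML J N 0 1 f P ∧ f 0 = x ∧ f 1 = y),
    pmlLength J N f P

/-- `D_J(x,y) = lim_{N→∞} D_J^{(N)}(x,y)`; since `D_J^{(N)}` is nonincreasing
in `N`, this limit is the infimum over `N`. -/
noncomputable def DJ (J : X → X → ℝ) (x y : X) : ℝ≥0∞ :=
  ⨅ N : ℕ, DJN J N x y

/-! The relaxed triangle inequality, applied once per partition point from the right, turns
`J (f a) (f b)` into `σ ^ (N - 1)` times the sum of the `J`-distances between consecutive
partition points, and each of these is at most the length of its piece. As the factor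
`σ ^ (N - 1)` is finite, a vanishing infimal length forces `J x y = 0`. -/

lemma quasi_le_pow_mul_sum_range (J : X → X → ℝ) {σ : ℝ} (hnonneg : ∀ x y, 0 ≤ J x y)
    (hσ : 1 ≤ σ) (htri : ∀ x y z, J x y ≤ σ * (J x z + J z y)) (z : ℕ → X) (n : ℕ) :
    J (z 0) (z (n + 1)) ≤ σ ^ n * ∑ i ∈ Finset.range (n + 1), J (z i) (z (i + 1)) := by
  induction n with
  | zero => simp
  | succ n ih =>
    have hσn : σ ≤ σ ^ (n + 1) := le_self_pow₀ hσ n.succ_ne_zero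
    have hlast := hnonneg (z (n + 1)) (z (n + 2))
    rw [Finset.sum_range_succ, mul_add]
    calc J (z 0) (z (n + 2))
        ≤ σ * (J (z 0) (z (n + 1)) + J (z (n + 1)) (z (n + 2))) := htri _ _ _
      _ ≤ σ * (σ ^ n * ∑ i ∈ Finset.range (n + 1), J (z i) (z (i + 1))
            + J (z (n + 1)) (z (n + 2))) := by gcongr
      _ ≤ _ := by rw [mul_add, ← mul_assoc, ← pow_succ']; gcongr

lemma ofReal_le_pieceLen (J : X → X → ℝ) (f : ℝ → X) {u v : ℝ} (huv : u ≤ v) :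
    ENNReal.ofReal (J (f u) (f v)) ≤ pieceLen J f u v := by
  let t : ℕ → ℝ := fun i => if i = 0 then u else v
  have ht : Monotone t := by
    intro i j hij
    dsimp only [t]
    split_ifs <;> first | rfl | exact huv | omega
  refine le_iSup_of_le 1 (le_iSup_of_le t (le_iSup_of_le ⟨ht, rfl, rfl⟩ ?_))
  simp [t]

lemma ofReal_le_pow_mul_pmlLength (J : X → X → ℝ) {σ : ℝ} (hnonneg : ∀ x y, 0 ≤ J x y)
    (hself : ∀ x, J x x = 0) (hσ : 1 ≤ σ) (htri : ∀ x y z, J x y ≤ σ * (J x z + J z y))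
    (N : ℕ) (f : ℝ → X) (P : ℕ → ℝ) (hP : ∀ i < N, P i ≤ P (i + 1)) :
    ENNReal.ofReal (J (f (P 0)) (f (P N))) ≤ ENNReal.ofReal (σ ^ (N - 1)) * pmlLength J N f P := by
  cases N with
  | zero => simp [hself]
  | succ M =>
    have hchain := quasi_le_pow_mul_sum_range J hnonneg hσ htri (fun i => f (P i)) M
    calc ENNReal.ofReal (J (f (P 0)) (f (P (M + 1))))
        ≤ ENNReal.ofReal (σ ^ M * ∑ i ∈ Finset.range (M + 1), J (f (P i)) (f (P (i + 1)))) :=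
          ENNReal.ofReal_le_ofReal hchain
      _ = ENNReal.ofReal (σ ^ M) *
            ∑ i ∈ Finset.range (M + 1), ENNReal.ofReal (J (f (P i)) (f (P (i + 1)))) := by
          rw [ENNReal.ofReal_mul (by positivity),
            ENNReal.ofReal_sum_of_nonneg fun i _ => hnonneg _ _]
      _ ≤ ENNReal.ofReal (σ ^ (M + 1 - 1)) * pmlLength J (M + 1) f P := by
          rw [Nat.add_sub_cancel]
          gcongr
          exact Finset.sum_le_sum fun i hi => ofReal_le_pieceLen J f (hP i (Finset.mem_range.mp hi))

lemma eq_of_DJN_eq_zero (J : X → X → ℝ) {N : ℕ} {x y : X} {c : ℝ≥0∞} (hc : c ≠ ⊤)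
    (hnonneg : ∀ x y, 0 ≤ J x y) (hiff : ∀ x y, J x y = 0 ↔ x = y)
    (hbound : ∀ (f : ℝ → X) (P : ℕ → ℝ), IsPML J N 0 1 f P → f 0 = x → f 1 = y →
      ENNReal.ofReal (J x y) ≤ c * pmlLength J N f P)
    (hD : DJN J N x y = 0) : x = y := by
  have hdiv : ENNReal.ofReal (J x y) / c ≤ DJN J N x y := by
    refine le_iInf₂ fun f P => le_iInf fun ⟨hf, hf0, hf1⟩ => ?_
    exact ENNReal.div_le_of_le_mul' (hbound f P hf hf0 hf1)
  rw [hD, nonpos_iff_eq_zero, ENNReal.div_eq_zero_iff, ENNReal.ofReal_eq_zero] at hdiv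
  exact (hiff x y).mp (le_antisymm (hdiv.resolve_right hc) (hnonneg x y))

theorem stmt_11_general (J : X → X → ℝ) (σ : ℝ)
    (hnonneg : ∀ x y, 0 ≤ J x y)
    (hiff : ∀ x y, J x y = 0 ↔ x = y)
    (hσ : 1 ≤ σ)
    (htri : ∀ x y z, J x y ≤ σ * (J x z + J z y))
    (N : ℕ) (a b : ℝ) (x y : X) :
    (∀ (f : ℝ → X) (P : ℕ → ℝ), IsPML J N a b f P → f a = x → f b = y →
      ENNReal.ofReal (J x y) ≤ ENNReal.ofReal (σ ^ (N - 1)) * pmlLength J N f P) ∧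
    (DJN J N x y = 0 → x = y) := by
  have hself : ∀ x, J x x = 0 := fun x => (hiff x x).mpr rfl
  have hbound : ∀ {a b : ℝ} (f : ℝ → X) (P : ℕ → ℝ), IsPML J N a b f P → f a = x → f b = y →
      ENNReal.ofReal (J x y) ≤ ENNReal.ofReal (σ ^ (N - 1)) * pmlLength J N f P := by
    rintro a b f P ⟨rfl, rfl, hP, -⟩ rfl rfl
    exact ofReal_le_pow_mul_pmlLength J hnonneg hself hσ htri N f P fun i hi => (hP i hi).le
  exact ⟨hbound, eq_of_DJN_eq_zero J ENNReal.ofReal_ne_top hnonneg hiff hbound⟩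

/-- If `f` is an `N`-piecewise metric Lipschitz curve from `x` to `y`, then
`J(x,y) ≤ σ(J)^(N-1) · L(f)`; in particular, `D_J^{(N)}(x,y) = 0` implies
`x = y`. -/
theorem stmt_11 (J : X → X → ℝ) (σ : ℝ)
    (hnonneg : ∀ x y, 0 ≤ J x y)
    (hiff : ∀ x y, J x y = 0 ↔ x = y)
    (hsymm : ∀ x y, J x y = J y x)
    (hσ : 1 ≤ σ)
    (htri : ∀ x y z, J x y ≤ σ * (J x z + J z y))
    (N : ℕ) (a b : ℝ) (x y : X) :
    (∀ (f : ℝ → X) (P : ℕ → ℝ), IsPML J N a b f P → f a = x → f b = y →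
      ENNReal.ofReal (J x y) ≤ ENNReal.ofReal (σ ^ (N - 1)) * pmlLength J N f P) ∧
    (DJN J N x y = 0 → x = y) :=
  stmt_11_general J σ hnonneg hiff hσ htri N a b x y
end

section
/- For α < 1 there exist atomic probability measures a, b, c in the plane ℝ² for which J_α(a,c) + J_α(c,b) < J_α(a,b); specifically, with a = ½δ_{(−1,y+1)} + ½δ_{(1,y+1)}, b = δ_{(0,0)}, c = δ_{(0,y)}, the inequality 2·(1/2)^α·√2 + y < 2·(1/2)^α·√(1+(y+1)²) holds for y sufficiently large. Hence J_α fails the triangle inequality. -/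
open Filter Topology
open scoped Classical

/-- An atomic probability measure supported on at most `N` points, encoded as a
finitely supported weight function: nonnegative weights summing to `1`, with at
most `N` atoms. -/
def AtomicProb {Y : Type*} (N : ℕ) (a : Y →₀ ℝ) : Prop :=
  (∀ y, 0 ≤ a y) ∧ (∑ y ∈ a.support, a y = 1) ∧ a.support.card ≤ N

/-- A transport plan from `a` to `b`: a finitely supported nonnegative weight
function on `Y × Y` whose marginals are `a` and `b`. -/
def IsPlan {Y : Type*} (a b : Y →₀ ℝ) (γ : (Y × Y) →₀ ℝ) : Prop :=
  (∀ p, 0 ≤ γ p) ∧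
  (∀ x : Y, ∑ p ∈ γ.support.filter (fun p => p.1 = x), γ p = a x) ∧
  (∀ y : Y, ∑ p ∈ γ.support.filter (fun p => p.2 = y), γ p = b y)

/-- The cost `H_α(γ) = ∑ γ_{ij}^α d(x_i, y_j)` of a transport plan. -/
noncomputable def Hcost {Y : Type*} [MetricSpace Y] (α : ℝ) (γ : (Y × Y) →₀ ℝ) : ℝ :=
  ∑ p ∈ γ.support, γ p ^ α * dist p.1 p.2

/-- `J_α(a,b)`: the minimal cost `H_α(γ)` over transport plans `γ` from `a`
to `b`. -/
noncomputable def Jalpha {Y : Type*} [MetricSpace Y] (α : ℝ) (a b : Y →₀ ℝ) : ℝ :=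
  sInf {c : ℝ | ∃ γ : (Y × Y) →₀ ℝ, IsPlan a b γ ∧ c = Hcost α γ}

/-!
When the target is a single atom `δ_z`, the only transport plan sends every atom `x` of the source
to `z` with its full mass, so `J_α(a, δ_z) = ∑ₓ a(x)^α d(x, z)`. For `a` made of two half-atoms at
distance `√2` from `c` and `b` at distance `y` below `c`, the triangle inequality would require
`2(1/2)^α √(1 + (y+1)²) ≤ 2(1/2)^α √2 + y`. For `α < 1` the factor `κ = 2(1/2)^α` exceeds `1`,
and since `√(1 + (y+1)²) ≥ y + 1` the left side grows like `κ y`, faster than the right side.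
-/

section SingleAtomTarget

variable {Y : Type*}

noncomputable def planToPoint (a : Y →₀ ℝ) (z : Y) : (Y × Y) →₀ ℝ :=
  a.embDomain (Function.Embedding.sectL Y z)

lemma planToPoint_apply_mk (a : Y →₀ ℝ) (z x : Y) : planToPoint a z (x, z) = a x :=
  Finsupp.embDomain_apply_self _ _ _

lemma planToPoint_apply_of_snd_ne (a : Y →₀ ℝ) {z : Y} {p : Y × Y} (h : p.2 ≠ z) :
    planToPoint a z p = 0 :=
  Finsupp.embDomain_of_notMem_range _ _ _ fun ⟨_, hx⟩ => h (hx ▸ rfl)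

lemma support_planToPoint (a : Y →₀ ℝ) (z : Y) :
    (planToPoint a z).support = a.support.map (Function.Embedding.sectL Y z) :=
  Finsupp.support_embDomain _ _

lemma isPlan_planToPoint {a : Y →₀ ℝ} (ha : ∀ x, 0 ≤ a x) (z : Y) {w : ℝ}
    (hw : ∑ x ∈ a.support, a x = w) : IsPlan a (Finsupp.single z w) (planToPoint a z) := by
  refine ⟨fun ⟨x, y⟩ => ?_, fun x => ?_, fun y => ?_⟩
  · by_cases h : y = z
    · subst h; rw [planToPoint_apply_mk]; exact ha x
    · rw [planToPoint_apply_of_snd_ne a h]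
  · rw [support_planToPoint, Finset.filter_map, Finset.sum_map]
    simp only [Function.comp_apply, Function.Embedding.sectL_apply, planToPoint_apply_mk,
      Finset.sum_filter, Finset.sum_ite_eq']
    split_ifs with hx
    · rfl
    · exact (Finsupp.notMem_support_iff.mp hx).symm
  · rw [support_planToPoint, Finset.filter_map, Finset.sum_map]
    simp only [Function.comp_apply, Function.Embedding.sectL_apply, planToPoint_apply_mk,
      Finsupp.single_apply]
    split_ifs with h
    · subst h; simpa using hw
    · simp [h]

lemma IsPlan.eq_planToPoint {a : Y →₀ ℝ} {z : Y} {w : ℝ} {γ : (Y × Y) →₀ ℝ}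
    (hγ : IsPlan a (Finsupp.single z w) γ) : γ = planToPoint a z := by
  obtain ⟨hpos, hfst, hsnd⟩ := hγ
  -- off the fibre `Y × {z}` the second marginal vanishes, and a sum of nonnegative terms is zero
  -- only if every term is
  have hzero : ∀ p : Y × Y, p.2 ≠ z → γ p = 0 := by
    intro p hp
    by_contra hne
    have hsum := hsnd p.2
    rw [Finsupp.single_eq_of_ne' (Ne.symm hp)] at hsum
    exact hne <| (Finset.sum_eq_zero_iff_of_nonneg fun q _ => hpos q).mp hsum p
      (Finset.mem_filter.mpr ⟨Finsupp.mem_support_iff.mpr hne, rfl⟩)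
  ext ⟨x, y⟩
  by_cases hy : y = z
  · subst hy
    rw [planToPoint_apply_mk, ← hfst x, Finset.sum_eq_single (x, y)]
    · rintro ⟨x', y'⟩ hp hne
      obtain rfl : x' = x := (Finset.mem_filter.mp hp).2
      exact hzero _ fun h => hne (by rw [show y' = y from h])
    · intro hnot
      by_contra hne
      exact hnot (Finset.mem_filter.mpr ⟨Finsupp.mem_support_iff.mpr hne, rfl⟩)
  · rw [planToPoint_apply_of_snd_ne a hy, hzero _ hy]

variable [MetricSpace Y]

lemma Hcost_planToPoint (α : ℝ) (a : Y →₀ ℝ) (z : Y) :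
    Hcost α (planToPoint a z) = ∑ x ∈ a.support, a x ^ α * dist x z := by
  rw [Hcost, support_planToPoint, Finset.sum_map]
  exact Finset.sum_congr rfl fun x _ => by rw [Function.Embedding.sectL_apply, planToPoint_apply_mk]

lemma Jalpha_single_right (α : ℝ) {a : Y →₀ ℝ} (ha : ∀ x, 0 ≤ a x) (z : Y) {w : ℝ}
    (hw : ∑ x ∈ a.support, a x = w) :
    Jalpha α a (Finsupp.single z w) = ∑ x ∈ a.support, a x ^ α * dist x z := by
  have hcosts : {c : ℝ | ∃ γ, IsPlan a (Finsupp.single z w) γ ∧ c = Hcost α γ}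
      = {Hcost α (planToPoint a z)} := by
    ext c
    constructor
    · rintro ⟨γ, hγ, rfl⟩
      rw [hγ.eq_planToPoint, Set.mem_singleton_iff]
    · rintro rfl
      exact ⟨planToPoint a z, isPlan_planToPoint ha z hw, rfl⟩
  rw [Jalpha, hcosts, csInf_singleton, Hcost_planToPoint]

lemma Jalpha_single_single (α : ℝ) (x z : Y) :
    Jalpha α (Finsupp.single x 1) (Finsupp.single z 1) = dist x z := by
  rw [Jalpha_single_right α (fun _ => by simp [Finsupp.single_apply]; split_ifs <;> norm_num) z
    (by simp), Finsupp.support_single _ one_ne_zero]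
  simp

lemma Jalpha_add_single_single {x₁ x₂ : Y} (hx : x₁ ≠ x₂) (α : ℝ) {s t : ℝ} (hs : 0 < s)
    (ht : 0 < t) (z : Y) :
    Jalpha α (Finsupp.single x₁ s + Finsupp.single x₂ t) (Finsupp.single z (s + t))
      = s ^ α * dist x₁ z + t ^ α * dist x₂ z := by
  have hsupp : (Finsupp.single x₁ s + Finsupp.single x₂ t).support = {x₁, x₂} := by
    rw [Finsupp.support_add_eq, Finsupp.support_single _ hs.ne',
      Finsupp.support_single _ ht.ne']
    · rfl
    · simp [Finsupp.support_single _ hs.ne', Finsupp.support_single _ ht.ne', hx]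
  have hx₁ : (Finsupp.single x₁ s + Finsupp.single x₂ t) x₁ = s := by simp [hx.symm]
  have hx₂ : (Finsupp.single x₁ s + Finsupp.single x₂ t) x₂ = t := by simp [hx]
  have hnonneg : ∀ x, 0 ≤ (Finsupp.single x₁ s + Finsupp.single x₂ t) x := fun x => by
    simp only [Finsupp.add_apply, Finsupp.single_apply]
    split_ifs <;> linarith
  rw [Jalpha_single_right α hnonneg z (by rw [hsupp, Finset.sum_pair hx, hx₁, hx₂]), hsupp,
    Finset.sum_pair hx, hx₁, hx₂]

end SingleAtomTarget

lemma dist_withLpEquiv_symm_pair (u v u' v' : ℝ) :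
    dist ((WithLp.equiv 2 (Fin 2 → ℝ)).symm ![u, v]) ((WithLp.equiv 2 (Fin 2 → ℝ)).symm ![u', v'])
      = √((u - u') ^ 2 + (v - v') ^ 2) := by
  simp [EuclideanSpace.dist_eq, Fin.sum_univ_two, Real.dist_eq, sq_abs]

lemma one_lt_two_mul_half_rpow {α : ℝ} (hα : α < 1) : 1 < 2 * (1 / 2 : ℝ) ^ α := by
  have h := Real.rpow_lt_rpow_of_exponent_gt (by norm_num : (0 : ℝ) < 1 / 2) (by norm_num) hα
  rw [Real.rpow_one] at h
  linarith

lemma eventually_mul_sqrt_two_add_lt {κ : ℝ} (hκ : 1 < κ) :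
    ∀ᶠ y in atTop, κ * √2 + y < κ * √(1 + (y + 1) ^ 2) := by
  filter_upwards [eventually_gt_atTop (κ * (√2 - 1) / (κ - 1))] with y hy
  have hgap : κ * (√2 - 1) < (κ - 1) * y := (div_lt_iff₀' (by linarith)).mp hy
  calc κ * √2 + y < κ * (y + 1) := by linarith
    _ ≤ κ * √(1 + (y + 1) ^ 2) := by gcongr; exact Real.le_sqrt_of_sq_le (by linarith)

/-- `J_α` fails the triangle inequality: in the Euclidean plane, with
`a = ½δ_{(−1,y+1)} + ½δ_{(1,y+1)}`, `b = δ_{(0,0)}`, `c = δ_{(0,y)}`, for all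
sufficiently large `y` one has
`2(1/2)^α √2 + y < 2(1/2)^α √(1+(y+1)²)` and `J_α(a,c) + J_α(c,b) < J_α(a,b)`. -/
theorem stmt_18 (α : ℝ) (hα : α < 1) :
    ∃ y₀ : ℝ, ∀ y ≥ y₀,
      (2 * (1 / 2 : ℝ) ^ α * Real.sqrt 2 + y
        < 2 * (1 / 2 : ℝ) ^ α * Real.sqrt (1 + (y + 1) ^ 2)) ∧
      (let pt : ℝ → ℝ → EuclideanSpace ℝ (Fin 2) :=
        fun u v => (WithLp.equiv 2 (Fin 2 → ℝ)).symm ![u, v]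
      let a : EuclideanSpace ℝ (Fin 2) →₀ ℝ :=
        Finsupp.single (pt (-1) (y + 1)) (1 / 2) + Finsupp.single (pt 1 (y + 1)) (1 / 2)
      let b : EuclideanSpace ℝ (Fin 2) →₀ ℝ := Finsupp.single (pt 0 0) 1
      let c : EuclideanSpace ℝ (Fin 2) →₀ ℝ := Finsupp.single (pt 0 y) 1
      Jalpha α a c + Jalpha α c b < Jalpha α a b) := by
  obtain ⟨y₀, hy₀⟩ := eventually_atTop.mp <|
    (eventually_mul_sqrt_two_add_lt (one_lt_two_mul_half_rpow hα)).and (eventually_ge_atTop 0)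
  refine ⟨y₀, fun y hy => ?_⟩
  obtain ⟨hlt, hy_nonneg⟩ := hy₀ y hy
  refine ⟨hlt, ?_⟩
  intro pt a b c
  have hne : pt (-1) (y + 1) ≠ pt 1 (y + 1) := fun h => by
    have h0 := congrFun ((WithLp.equiv 2 (Fin 2 → ℝ)).symm.injective h) 0
    norm_num at h0
  have hmass : (1 / 2 + 1 / 2 : ℝ) = 1 := by norm_num
  have hhalf : (0 : ℝ) < 1 / 2 := by norm_num
  have hac := Jalpha_add_single_single hne α hhalf hhalf (pt 0 y)
  have hab := Jalpha_add_single_single hne α hhalf hhalf (pt 0 0)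
  rw [hmass] at hac hab
  simp only [a, b, c, hac, hab, Jalpha_single_single, pt, dist_withLpEquiv_symm_pair]
  norm_num [Real.sqrt_sq hy_nonneg]
  linarith
end
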